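/- arXiv:2402.14716 — 5 statements merged into one kernel-verified Lean document; each statement's English description precedes it below -/
import Mathlib

section
/- The proper-proper observability Gramian Q_pp := ∫₀^∞ F_J(t)^T·M·P_p·M·F_J(t) dt is well defined and solves the projected continuous-time Lyapunov equation E^T·Q_pp·A + A^T·Q_pp·E = −P_r^T·M·P_p·M·P_r together with the projection condition Q_pp = P_l^T·Q_pp·P_l. -/
open MeasureTheory Matrix

/-- The matrix exponential of a real square matrix. -/
noncomputable def mexp {d : ℕ} (X : Matrix (Fin d) (Fin d) ℝ) : Matrix (Fin d) (Fin d) ℝ :=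
  NormedSpace.exp X

/-- The operator norm on real matrices, induced by the Euclidean (`ℓ²`) norms. -/
noncomputable def opNorm {d e : ℕ} (X : Matrix (Fin d) (Fin e) ℝ) : ℝ :=
  letI := Matrix.instL2OpNormedAddCommGroup (m := Fin d) (n := Fin e) (𝕜 := ℝ)
  ‖X‖

/-- Entrywise integral over `(0, ∞)` of a matrix-valued function. -/
noncomputable def matIntIoi {a b : Type*} (F : ℝ → Matrix a b ℝ) : Matrix a b ℝ :=
  Matrix.of fun i j => ∫ t in Set.Ioi (0:ℝ), F t i j

/-- Entrywise integrability over `(0, ∞)` of a matrix-valued function. -/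
def MatIntegrableIoi {a b : Type*} (F : ℝ → Matrix a b ℝ) : Prop :=
  ∀ i j, MeasureTheory.IntegrableOn (fun t => F t i j) (Set.Ioi 0)

/-- Kronecker product of two vectors in `ℝ^m`, an element of `ℝ^{m²}`. -/
def kron {m : ℕ} (a b : Fin m → ℝ) : Fin m × Fin m → ℝ := fun p => a p.1 * b p.2

/-- Vectorization of an `m × m` matrix as an element of `ℝ^{m²}`. -/
def vecm {m : ℕ} (X : Matrix (Fin m) (Fin m) ℝ) : Fin m × Fin m → ℝ := fun p => X p.1 p.2

/-- Squared Euclidean norm of a vector. -/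
def enormSq {ι : Type*} [Fintype ι] (v : ι → ℝ) : ℝ := ∑ i, (v i) ^ 2

/-- Euclidean inner product of two vectors. -/
def dotv {ι : Type*} [Fintype ι] (v w : ι → ℝ) : ℝ := ∑ i, v i * w i

/-!
With `K := M * Pp * M`, the entries of `F_J(t)` are `O(e^{-αt})`, so those of `F_J(t)ᵀ K F_J(t)` are
`O(e^{-2αt})`, which gives integrability. Put `G(t) := F_J(t) E = T⁻¹ diag(e^{tJ}, 0) T`; then
`G'(t) = F_J(t) A`, so the integrand of `Eᵀ Q_pp A + Aᵀ Q_pp E` is `d/dt (G(t)ᵀ K G(t))`, and since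
`G` decays and `G(0) = P_r` the integral is `-P_rᵀ K P_r`. The projection identity already holds
for the integrand, because `F_J(t) P_l = F_J(t)`.
-/

open Asymptotics Filter Topology

theorem abs_apply_le_opNorm {d e : ℕ} (X : Matrix (Fin d) (Fin e) ℝ) (i : Fin d) (j : Fin e) :
    |X i j| ≤ opNorm X := by
  let := Matrix.instL2OpNormedAddCommGroup (m := Fin d) (n := Fin e) (𝕜 := ℝ)
  calc |X i j| = ‖(EuclideanSpace.equiv (Fin d) ℝ).symm (X *ᵥ EuclideanSpace.single j 1) i‖ := by
        simp
    _ ≤ ‖(EuclideanSpace.equiv (Fin d) ℝ).symm (X *ᵥ EuclideanSpace.single j 1)‖ :=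
        PiLp.norm_apply_le _ _
    _ ≤ opNorm X * ‖EuclideanSpace.single j (1 : ℝ)‖ := X.l2_opNorm_mulVec _
    _ = opNorm X := by simp

theorem hasDerivAt_mexp_smul_apply {d : ℕ} (J : Matrix (Fin d) (Fin d) ℝ) (t : ℝ) (a b : Fin d) :
    HasDerivAt (fun u => mexp (u • J) a b) ((mexp (t • J) * J) a b) t := by
  let : NormedRing (Matrix (Fin d) (Fin d) ℝ) := Matrix.linftyOpNormedRing
  let : NormedAlgebra ℝ (Matrix (Fin d) (Fin d) ℝ) := Matrix.linftyOpNormedAlgebra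
  exact (LinearMap.toContinuousLinearMap (entryLinearMap ℝ ℝ a b)).hasFDerivAt.comp_hasDerivAt t
    (hasDerivAt_exp_smul_const J t)

theorem mexp_zero {d : ℕ} : mexp (0 : Matrix (Fin d) (Fin d) ℝ) = 1 :=
  NormedSpace.exp_zero

def IsExpDecaying {m n : Type*} (α : ℝ) (F : ℝ → Matrix m n ℝ) : Prop :=
  Continuous F ∧ ∀ i j, (fun t => F t i j) =O[atTop] fun t => Real.exp (-α * t)

namespace IsExpDecaying

variable {l m n p : Type*} {α β : ℝ}

theorem add {F G : ℝ → Matrix m n ℝ} (hF : IsExpDecaying α F) (hG : IsExpDecaying α G) :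
    IsExpDecaying α (fun t => F t + G t) :=
  ⟨hF.1.add hG.1, fun i j => (hF.2 i j).add (hG.2 i j)⟩

theorem transpose {F : ℝ → Matrix m n ℝ} (hF : IsExpDecaying α F) :
    IsExpDecaying α (fun t => (F t)ᵀ) :=
  ⟨hF.1.matrix_transpose, fun i j => hF.2 j i⟩

theorem const_mul [Fintype m] {F : ℝ → Matrix m n ℝ} (hF : IsExpDecaying α F)
    (P : Matrix l m ℝ) : IsExpDecaying α (fun t => P * F t) := by
  refine ⟨continuous_const.matrix_mul hF.1, fun i j => ?_⟩
  simp only [mul_apply]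
  exact IsBigO.fun_sum fun k _ => (hF.2 k j).const_mul_left (P i k)

theorem mul_const [Fintype n] {F : ℝ → Matrix m n ℝ} (hF : IsExpDecaying α F)
    (Q : Matrix n p ℝ) : IsExpDecaying α (fun t => F t * Q) := by
  refine ⟨hF.1.matrix_mul continuous_const, fun i j => ?_⟩
  simp only [mul_apply]
  exact IsBigO.fun_sum fun k _ =>
    ((hF.2 i k).const_mul_left (Q k j)).congr_left fun t => mul_comm _ _

theorem mul [Fintype n] {F : ℝ → Matrix m n ℝ} {G : ℝ → Matrix n p ℝ}
    (hF : IsExpDecaying α F) (hG : IsExpDecaying β G) :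
    IsExpDecaying (α + β) (fun t => F t * G t) := by
  refine ⟨hF.1.matrix_mul hG.1, fun i j => ?_⟩
  simp only [mul_apply]
  refine IsBigO.fun_sum fun k _ => ((hF.2 i k).mul (hG.2 k j)).congr_right fun t => ?_
  rw [← Real.exp_add]
  congr 1
  ring

theorem fromBlocks_zero {D : ℝ → Matrix m n ℝ} (hD : IsExpDecaying α D) :
    IsExpDecaying α (fun t => (fromBlocks (D t) 0 0 0 : Matrix (m ⊕ l) (n ⊕ p) ℝ)) := by
  refine ⟨hD.1.matrix_fromBlocks continuous_const continuous_const continuous_const, ?_⟩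
  rintro (i | i) (j | j)
  · exact hD.2 i j
  all_goals exact isBigO_zero _ _

theorem matIntegrableIoi (hα : 0 < α) {F : ℝ → Matrix m n ℝ} (hF : IsExpDecaying α F) :
    MatIntegrableIoi F := fun i j =>
  integrable_of_isBigO_exp_neg hα (hF.1.matrix_elem i j).continuousOn (hF.2 i j)

theorem tendsto_apply (hα : 0 < α) {F : ℝ → Matrix m n ℝ} (hF : IsExpDecaying α F)
    (i : m) (j : n) : Tendsto (fun t => F t i j) atTop (𝓝 0) :=
  (hF.2 i j).trans_tendsto <|
    Real.tendsto_exp_atBot.comp (tendsto_id.const_mul_atTop_of_neg (neg_neg_iff_pos.2 hα))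

end IsExpDecaying

theorem isExpDecaying_mexp_smul {d : ℕ} {J : Matrix (Fin d) (Fin d) ℝ} {C α : ℝ}
    (hJ : ∀ t : ℝ, 0 ≤ t → opNorm (mexp (t • J)) ≤ C * Real.exp (-α * t)) :
    IsExpDecaying α (fun t => mexp (t • J)) := by
  refine ⟨continuous_matrix fun a b => continuous_iff_continuousAt.2 fun t =>
    (hasDerivAt_mexp_smul_apply J t a b).continuousAt, fun a b => IsBigO.of_bound C ?_⟩
  filter_upwards [eventually_ge_atTop 0] with t ht
  rw [Real.norm_eq_abs, Real.norm_of_nonneg (Real.exp_pos _).le]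
  exact (abs_apply_le_opNorm _ a b).trans (hJ t ht)

section MatIntIoi

variable {l m n p : Type*}

theorem MatIntegrableIoi.const_mul [Fintype m] {F : ℝ → Matrix m n ℝ} (hF : MatIntegrableIoi F)
    (P : Matrix l m ℝ) : MatIntegrableIoi (fun t => P * F t) := fun i j => by
  simp only [mul_apply]
  exact integrable_finsetSum _ fun k _ => (hF k j).const_mul (P i k)

theorem MatIntegrableIoi.mul_const [Fintype n] {F : ℝ → Matrix m n ℝ} (hF : MatIntegrableIoi F)
    (Q : Matrix n p ℝ) : MatIntegrableIoi (fun t => F t * Q) := fun i j => by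
  simp only [mul_apply]
  exact integrable_finsetSum _ fun k _ => (hF i k).mul_const (Q k j)

theorem mul_matIntIoi [Fintype m] {F : ℝ → Matrix m n ℝ} (hF : MatIntegrableIoi F)
    (P : Matrix l m ℝ) : P * matIntIoi F = matIntIoi (fun t => P * F t) := by
  ext i j
  simp only [matIntIoi, mul_apply, of_apply]
  rw [integral_finsetSum _ fun k _ => (hF k j).const_mul (P i k)]
  simp only [integral_const_mul]

theorem matIntIoi_mul [Fintype n] {F : ℝ → Matrix m n ℝ} (hF : MatIntegrableIoi F)
    (Q : Matrix n p ℝ) : matIntIoi F * Q = matIntIoi (fun t => F t * Q) := by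
  ext i j
  simp only [matIntIoi, mul_apply, of_apply]
  rw [integral_finsetSum _ fun k _ => (hF i k).mul_const (Q k j)]
  simp only [integral_mul_const]

theorem matIntIoi_add {F G : ℝ → Matrix m n ℝ} (hF : MatIntegrableIoi F)
    (hG : MatIntegrableIoi G) : matIntIoi F + matIntIoi G = matIntIoi (fun t => F t + G t) := by
  ext i j
  exact (integral_add (hF i j) (hG i j)).symm

theorem matIntIoi_eq_neg_of_hasDerivAt_of_tendsto {F F' : ℝ → Matrix m n ℝ}
    (hderiv : ∀ t i j, HasDerivAt (fun u => F u i j) (F' t i j) t) (hF' : MatIntegrableIoi F')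
    (hF : ∀ i j, Tendsto (fun t => F t i j) atTop (𝓝 0)) : matIntIoi F' = -F 0 := by
  ext i j
  simpa [matIntIoi] using
    integral_Ioi_of_hasDerivAt_of_tendsto' (fun t _ => hderiv t i j) (hF' i j) (hF i j)

end MatIntIoi

section Derivatives

variable {l m n p : Type*} {t : ℝ}

theorem hasDerivAt_matrix_mul_apply [Fintype n] {X : ℝ → Matrix m n ℝ} {Y : ℝ → Matrix n p ℝ}
    {X' : Matrix m n ℝ} {Y' : Matrix n p ℝ}
    (hX : ∀ i k, HasDerivAt (fun u => X u i k) (X' i k) t)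
    (hY : ∀ k j, HasDerivAt (fun u => Y u k j) (Y' k j) t) (i : m) (j : p) :
    HasDerivAt (fun u => (X u * Y u) i j) ((X' * Y t + X t * Y') i j) t := by
  simp only [Matrix.add_apply, mul_apply, ← Finset.sum_add_distrib]
  exact HasDerivAt.fun_sum fun k _ => (hX i k).fun_mul (hY k j)

theorem hasDerivAt_const_mul_mul_apply [Fintype m] [Fintype n] {X : ℝ → Matrix m n ℝ}
    {X' : Matrix m n ℝ} (hX : ∀ k k', HasDerivAt (fun u => X u k k') (X' k k') t)
    (P : Matrix l m ℝ) (Q : Matrix n p ℝ) (i : l) (j : p) :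
    HasDerivAt (fun u => (P * X u * Q) i j) ((P * X' * Q) i j) t := by
  simp only [mul_apply, Finset.sum_mul]
  exact HasDerivAt.fun_sum fun k' _ => HasDerivAt.fun_sum fun k _ =>
    ((hX k k').const_mul (P i k)).mul_const (Q k' j)

theorem hasDerivAt_fromBlocks_zero_apply {D : ℝ → Matrix m n ℝ} {D' : Matrix m n ℝ}
    (hD : ∀ a b, HasDerivAt (fun u => D u a b) (D' a b) t) :
    ∀ i j, HasDerivAt (fun u => (fromBlocks (D u) 0 0 0 : Matrix (m ⊕ l) (n ⊕ p) ℝ) i j)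
      ((fromBlocks D' 0 0 0 : Matrix (m ⊕ l) (n ⊕ p) ℝ) i j) t := by
  rintro (i | i) (j | j)
  · exact hD i j
  all_goals exact hasDerivAt_const t 0

theorem hasDerivAt_transpose_mul_mul_apply [Fintype m] {G : ℝ → Matrix m n ℝ} {G' : Matrix m n ℝ}
    (hG : ∀ i j, HasDerivAt (fun u => G u i j) (G' i j) t) (K : Matrix m m ℝ) (i j : n) :
    HasDerivAt (fun u => ((G u)ᵀ * K * G u) i j) ((G'ᵀ * K * G t + (G t)ᵀ * K * G') i j) t := by
  have hGK : ∀ i k, HasDerivAt (fun u => ((G u)ᵀ * K) i k) ((G'ᵀ * K) i k) t := by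
    simpa using hasDerivAt_matrix_mul_apply (X := fun u => (G u)ᵀ) (X' := G'ᵀ) (Y' := 0)
      (fun i k => hG k i) (fun k j => hasDerivAt_const t (K k j))
  exact hasDerivAt_matrix_mul_apply hGK hG i j

end Derivatives

theorem matIntIoi_deriv_transpose_mul_mul_eq_neg {m n : Type*} [Fintype m] {α : ℝ} (hα : 0 < α)
    {G G' : ℝ → Matrix m n ℝ} (hG : IsExpDecaying α G) (hG' : IsExpDecaying α G')
    (hderiv : ∀ t i j, HasDerivAt (fun u => G u i j) (G' t i j) t) (K : Matrix m m ℝ) :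
    matIntIoi (fun t => (G' t)ᵀ * K * G t + (G t)ᵀ * K * G' t) = -((G 0)ᵀ * K * G 0) :=
  matIntIoi_eq_neg_of_hasDerivAt_of_tendsto
    (fun t => hasDerivAt_transpose_mul_mul_apply (hderiv t) K)
    ((((hG'.transpose.mul_const K).mul hG).add
      ((hG.transpose.mul_const K).mul hG')).matIntegrableIoi (by linarith))
    (((hG.transpose.mul_const K).mul hG).tendsto_apply (by linarith))

theorem mul_fromBlocks_mul_cancel_fromBlocks_mul {R k l m n p : Type*} [Semiring R]
    [Fintype k] [Fintype m] [Fintype n] [DecidableEq m] [DecidableEq n]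
    (L : Matrix l (m ⊕ n) R) (X : Matrix m m R) {Winv : Matrix (m ⊕ n) k R}
    {W : Matrix k (m ⊕ n) R} (hW : Winv * W = 1) (Y₁ : Matrix m m R) (Y₂ : Matrix n n R)
    (Q : Matrix (m ⊕ n) p R) :
    L * (fromBlocks X 0 0 0 : Matrix (m ⊕ n) (m ⊕ n) R) * Winv * (W * fromBlocks Y₁ 0 0 Y₂ * Q)
      = L * (fromBlocks (X * Y₁) 0 0 0 : Matrix (m ⊕ n) (m ⊕ n) R) * Q := by
  simp only [← Matrix.mul_assoc]
  rw [Matrix.mul_assoc (L * fromBlocks X 0 0 0) Winv W, hW, Matrix.mul_one, Matrix.mul_assoc L,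
    fromBlocks_multiply]
  simp

theorem proper_proper_observability_gramian_general
    {nf ni : ℕ}
    -- Weierstraß canonical form data for the full-order system
    (W T Winv Tinv : Matrix (Fin nf ⊕ Fin ni) (Fin nf ⊕ Fin ni) ℝ)
    (hW' : Winv * W = 1)
    (J : Matrix (Fin nf) (Fin nf) ℝ) (N : Matrix (Fin ni) (Fin ni) ℝ)
    (C α : ℝ) (hα : 0 < α)
    (hJ : ∀ t : ℝ, 0 ≤ t → opNorm (mexp (t • J)) ≤ C * Real.exp (-α * t))
    (E A : Matrix (Fin nf ⊕ Fin ni) (Fin nf ⊕ Fin ni) ℝ)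
    (hE : E = W * fromBlocks 1 0 0 N * T)
    (hA : A = W * fromBlocks J 0 0 1 * T)
    (M : Matrix (Fin nf ⊕ Fin ni) (Fin nf ⊕ Fin ni) ℝ)
    -- spectral projectors
    (Pr Pl : Matrix (Fin nf ⊕ Fin ni) (Fin nf ⊕ Fin ni) ℝ)
    (hPr : Pr = Tinv * fromBlocks 1 0 0 0 * T)
    (hPl : Pl = W * fromBlocks 1 0 0 0 * Winv)
    -- fundamental solution matrices
    (FJ : ℝ → Matrix (Fin nf ⊕ Fin ni) (Fin nf ⊕ Fin ni) ℝ)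
    (hFJ : ∀ t : ℝ, FJ t = Tinv * fromBlocks (mexp (t • J)) 0 0 0 * Winv)
    -- proper and improper controllability Gramians
    (Pp : Matrix (Fin nf ⊕ Fin ni) (Fin nf ⊕ Fin ni) ℝ)
    -- the proper-proper observability Gramian
    (Qpp : Matrix (Fin nf ⊕ Fin ni) (Fin nf ⊕ Fin ni) ℝ)
    (hQpp : Qpp = matIntIoi fun t => (FJ t)ᵀ * M * Pp * M * FJ t) :
    MatIntegrableIoi (fun t => (FJ t)ᵀ * M * Pp * M * FJ t) ∧
      Eᵀ * Qpp * A + Aᵀ * Qpp * E = -(Prᵀ * M * Pp * M * Pr) ∧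
      Qpp = Plᵀ * Qpp * Pl := by
  have hFJdecay : IsExpDecaying α FJ := by
    simpa only [← hFJ] using
      ((isExpDecaying_mexp_smul hJ).fromBlocks_zero.const_mul Tinv).mul_const Winv
  have hΦ : MatIntegrableIoi (fun t => (FJ t)ᵀ * M * Pp * M * FJ t) :=
    ((((hFJdecay.transpose.mul_const M).mul_const Pp).mul_const M).mul hFJdecay).matIntegrableIoi
      (by linarith)
  have hconj : ∀ P Q,
      P * Qpp * Q = matIntIoi (fun t => P * ((FJ t)ᵀ * M * Pp * M * FJ t) * Q) := fun P Q => by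
    rw [hQpp, mul_matIntIoi hΦ, matIntIoi_mul (hΦ.const_mul P)]
  have hFJE : ∀ t, FJ t * E = Tinv * fromBlocks (mexp (t • J)) 0 0 0 * T := fun t => by
    rw [hFJ, hE, mul_fromBlocks_mul_cancel_fromBlocks_mul _ _ hW', Matrix.mul_one]
  have hFJA : ∀ t, FJ t * A = Tinv * fromBlocks (mexp (t • J) * J) 0 0 0 * T := fun t => by
    rw [hFJ, hA, mul_fromBlocks_mul_cancel_fromBlocks_mul _ _ hW']
  have hFJPl : ∀ t, FJ t * Pl = FJ t := fun t => by
    rw [hFJ, hPl, mul_fromBlocks_mul_cancel_fromBlocks_mul _ _ hW', Matrix.mul_one]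
  refine ⟨hΦ, ?_, ?_⟩
  · have hderiv : ∀ t i j, HasDerivAt (fun u => (FJ u * E) i j) ((FJ t * A) i j) t := by
      intro t
      simpa only [hFJE, hFJA] using hasDerivAt_const_mul_mul_apply
        (hasDerivAt_fromBlocks_zero_apply (hasDerivAt_mexp_smul_apply J t)) Tinv T
    have hFJE0 : FJ 0 * E = Pr := by rw [hFJE, zero_smul, mexp_zero, hPr]
    rw [hconj, hconj, matIntIoi_add ((hΦ.const_mul _).mul_const _) ((hΦ.const_mul _).mul_const _)]
    calc _ = matIntIoi (fun t => (FJ t * A)ᵀ * (M * Pp * M) * (FJ t * E)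
          + (FJ t * E)ᵀ * (M * Pp * M) * (FJ t * A)) := by
          congr 1 with t : 1
          rw [add_comm]
          simp only [Matrix.transpose_mul, Matrix.mul_assoc]
      _ = -(Prᵀ * M * Pp * M * Pr) := by
          rw [matIntIoi_deriv_transpose_mul_mul_eq_neg hα (hFJdecay.mul_const E)
            (hFJdecay.mul_const A) hderiv, hFJE0]
          simp only [Matrix.mul_assoc]
  · rw [hconj, hQpp]
    congr 1 with t : 1
    conv_lhs => rw [← hFJPl t]
    simp only [Matrix.transpose_mul, Matrix.mul_assoc]

/-- The proper-proper observability Gramian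
`Q_pp = ∫₀^∞ F_J(t)ᵀ·M·P_p·M·F_J(t) dt` is well defined and solves the projected
continuous-time Lyapunov equation `Eᵀ·Q_pp·A + Aᵀ·Q_pp·E = −P_rᵀ·M·P_p·M·P_r` together with
`Q_pp = P_lᵀ·Q_pp·P_l`. -/
theorem proper_proper_observability_gramian
    {nf ni m : ℕ} (hm : 0 < m) (ν : ℕ) (hν : 0 < ν)
    -- Weierstraß canonical form data for the full-order system
    (W T Winv Tinv : Matrix (Fin nf ⊕ Fin ni) (Fin nf ⊕ Fin ni) ℝ)
    (hW : W * Winv = 1) (hW' : Winv * W = 1)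
    (hT : T * Tinv = 1) (hT' : Tinv * T = 1)
    (J : Matrix (Fin nf) (Fin nf) ℝ) (N : Matrix (Fin ni) (Fin ni) ℝ) (hN : N ^ ν = 0)
    (C α : ℝ) (hC : 0 < C) (hα : 0 < α)
    (hJ : ∀ t : ℝ, 0 ≤ t → opNorm (mexp (t • J)) ≤ C * Real.exp (-α * t))
    (E A : Matrix (Fin nf ⊕ Fin ni) (Fin nf ⊕ Fin ni) ℝ)
    (hE : E = W * fromBlocks 1 0 0 N * T)
    (hA : A = W * fromBlocks J 0 0 1 * T)
    (B : Matrix (Fin nf ⊕ Fin ni) (Fin m) ℝ)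
    (M : Matrix (Fin nf ⊕ Fin ni) (Fin nf ⊕ Fin ni) ℝ) (hM : M.IsSymm)
    -- spectral projectors
    (Pr Pl : Matrix (Fin nf ⊕ Fin ni) (Fin nf ⊕ Fin ni) ℝ)
    (hPr : Pr = Tinv * fromBlocks 1 0 0 0 * T)
    (hPl : Pl = W * fromBlocks 1 0 0 0 * Winv)
    -- fundamental solution matrices
    (FJ : ℝ → Matrix (Fin nf ⊕ Fin ni) (Fin nf ⊕ Fin ni) ℝ)
    (hFJ : ∀ t : ℝ, FJ t = Tinv * fromBlocks (mexp (t • J)) 0 0 0 * Winv)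
    (FN : ℕ → Matrix (Fin nf ⊕ Fin ni) (Fin nf ⊕ Fin ni) ℝ)
    (hFN : ∀ k : ℕ, FN k = Tinv * fromBlocks 0 0 0 (-(N ^ k)) * Winv)
    -- proper and improper controllability Gramians
    (Pp : Matrix (Fin nf ⊕ Fin ni) (Fin nf ⊕ Fin ni) ℝ)
    (hPp : Pp = matIntIoi fun t => FJ t * B * Bᵀ * (FJ t)ᵀ)
    (Pimp : Matrix (Fin nf ⊕ Fin ni) (Fin nf ⊕ Fin ni) ℝ)
    (hPimp : Pimp = ∑ k ∈ Finset.range ν, FN k * B * Bᵀ * (FN k)ᵀ)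
    -- the proper-proper observability Gramian
    (Qpp : Matrix (Fin nf ⊕ Fin ni) (Fin nf ⊕ Fin ni) ℝ)
    (hQpp : Qpp = matIntIoi fun t => (FJ t)ᵀ * M * Pp * M * FJ t) :
    MatIntegrableIoi (fun t => (FJ t)ᵀ * M * Pp * M * FJ t) ∧
      Eᵀ * Qpp * A + Aᵀ * Qpp * E = -(Prᵀ * M * Pp * M * Pr) ∧
      Qpp = Plᵀ * Qpp * Pl :=
  proper_proper_observability_gramian_general W T Winv Tinv hW' J N C α hα hJ E A hE hA M Pr Pl hPr
    hPl FJ hFJ Pp Qpp hQpp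
end

section
/- The proper-improper observability Gramian Q_pi := Σ_{k=0}^{ν−1} F_N(k)^T·M·P_p·M·F_N(k) solves the projected generalized discrete-time Lyapunov equation A^T·Q_pi·A − E^T·Q_pi·E = (I − P_r)^T·M·P_p·M·(I − P_r) together with the projection condition P_l^T·Q_pi·P_l = 0. -/
/-! In Weierstraß coordinates `F_N(k) A` and `F_N(k) E` are the same matrix
`G k = -T⁻¹ diag(0, N^k) T` at the consecutive indices `k` and `k + 1`, so with `Y = M P_p M` the
difference `Aᵀ Q_pi A - Eᵀ Q_pi E = Σ_k (G kᵀ Y G k - G (k+1)ᵀ Y G (k+1))` telescopes to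
`G 0ᵀ Y G 0`, because `G ν = 0` by nilpotency; and `G 0 = -(I - P_r)`. The projection
condition holds termwise, since `F_N(k) P_l = 0`. -/

open MeasureTheory Matrix

section Congruence

variable {ι R : Type*} [Fintype ι]

theorem transpose_mul_sum_mul [CommSemiring R] (F : ℕ → Matrix ι ι R) (Y Z : Matrix ι ι R)
    (s : Finset ℕ) :
    Zᵀ * (∑ k ∈ s, (F k)ᵀ * Y * F k) * Z = ∑ k ∈ s, (F k * Z)ᵀ * Y * (F k * Z) := by
  simp only [Finset.mul_sum, Finset.sum_mul, transpose_mul, Matrix.mul_assoc]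

theorem transpose_mul_sum_mul_sub_eq_of_shift [CommRing R] {F G : ℕ → Matrix ι ι R}
    {A E : Matrix ι ι R} {ν : ℕ} (hA : ∀ k, F k * A = G k) (hE : ∀ k, F k * E = G (k + 1))
    (hG : G ν = 0) (Y : Matrix ι ι R) :
    Aᵀ * (∑ k ∈ Finset.range ν, (F k)ᵀ * Y * F k) * A -
        Eᵀ * (∑ k ∈ Finset.range ν, (F k)ᵀ * Y * F k) * E = (G 0)ᵀ * Y * G 0 := by
  rw [transpose_mul_sum_mul, transpose_mul_sum_mul, ← Finset.sum_sub_distrib]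
  simp only [hA, hE]
  rw [Finset.sum_range_sub' (fun k => (G k)ᵀ * Y * G k), hG]
  simp only [transpose_zero, Matrix.zero_mul, sub_zero]

theorem transpose_mul_sum_mul_eq_zero [CommSemiring R] {F : ℕ → Matrix ι ι R}
    {P : Matrix ι ι R} (hP : ∀ k, F k * P = 0) (Y : Matrix ι ι R) (s : Finset ℕ) :
    Pᵀ * (∑ k ∈ s, (F k)ᵀ * Y * F k) * P = 0 := by
  simp [transpose_mul_sum_mul, hP]

end Congruence

section Blocks

variable {ι κ R : Type*}

theorem mul_mul_mul_mul_of_mul_eq_one [Fintype ι] [DecidableEq ι] [Semiring R]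
    {P Q Q' S X Y : Matrix ι ι R} (hQ : Q * Q' = 1) :
    P * X * Q * (Q' * Y * S) = P * (X * Y) * S := by
  simp only [Matrix.mul_assoc]
  rw [← Matrix.mul_assoc Q, hQ, Matrix.one_mul]

theorem fromBlocks_zero_mul_fromBlocks_diag [Fintype ι] [Fintype κ] [Semiring R]
    (D D₁ : Matrix κ κ R) (A₁ : Matrix ι ι R) :
    fromBlocks (0 : Matrix ι ι R) 0 0 D * fromBlocks A₁ 0 0 D₁ =
      fromBlocks 0 0 0 (D * D₁) := by
  simp [fromBlocks_multiply]

theorem one_sub_fromBlocks_one_zero [DecidableEq ι] [DecidableEq κ] [Ring R] :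
    (1 : Matrix (ι ⊕ κ) (ι ⊕ κ) R) - fromBlocks 1 0 0 0 = fromBlocks 0 0 0 1 := by
  rw [sub_eq_iff_eq_add, fromBlocks_add, ← fromBlocks_one]
  simp

end Blocks

theorem proper_improper_observability_gramian_general
    {nf ni : ℕ} (ν : ℕ)
    -- Weierstraß canonical form data for the full-order system
    (W T Winv Tinv : Matrix (Fin nf ⊕ Fin ni) (Fin nf ⊕ Fin ni) ℝ)
    (hW' : Winv * W = 1)
    (hT' : Tinv * T = 1)
    (J : Matrix (Fin nf) (Fin nf) ℝ) (N : Matrix (Fin ni) (Fin ni) ℝ) (hN : N ^ ν = 0)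
    (E A : Matrix (Fin nf ⊕ Fin ni) (Fin nf ⊕ Fin ni) ℝ)
    (hE : E = W * fromBlocks 1 0 0 N * T)
    (hA : A = W * fromBlocks J 0 0 1 * T)
    (M : Matrix (Fin nf ⊕ Fin ni) (Fin nf ⊕ Fin ni) ℝ)
    -- spectral projectors
    (Pr Pl : Matrix (Fin nf ⊕ Fin ni) (Fin nf ⊕ Fin ni) ℝ)
    (hPr : Pr = Tinv * fromBlocks 1 0 0 0 * T)
    (hPl : Pl = W * fromBlocks 1 0 0 0 * Winv)
    -- fundamental solution matrices
    (FN : ℕ → Matrix (Fin nf ⊕ Fin ni) (Fin nf ⊕ Fin ni) ℝ)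
    (hFN : ∀ k : ℕ, FN k = Tinv * fromBlocks 0 0 0 (-(N ^ k)) * Winv)
    -- proper and improper controllability Gramians
    (Pp : Matrix (Fin nf ⊕ Fin ni) (Fin nf ⊕ Fin ni) ℝ)
    -- the proper-improper observability Gramian
    (Qpi : Matrix (Fin nf ⊕ Fin ni) (Fin nf ⊕ Fin ni) ℝ)
    (hQpi : Qpi = ∑ k ∈ Finset.range ν, (FN k)ᵀ * M * Pp * M * FN k) :
    Aᵀ * Qpi * A - Eᵀ * Qpi * E = (1 - Pr)ᵀ * M * Pp * M * (1 - Pr) ∧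
      Plᵀ * Qpi * Pl = 0 := by
  set G : ℕ → Matrix (Fin nf ⊕ Fin ni) (Fin nf ⊕ Fin ni) ℝ :=
    fun k => Tinv * fromBlocks 0 0 0 (-(N ^ k)) * T
  have hFN_mul : ∀ k (A₁ : Matrix (Fin nf) (Fin nf) ℝ) D₁ S,
      FN k * (W * fromBlocks A₁ 0 0 D₁ * S) = Tinv * fromBlocks 0 0 0 (-(N ^ k) * D₁) * S :=
    fun k A₁ D₁ S => by
    rw [hFN, mul_mul_mul_mul_of_mul_eq_one hW', fromBlocks_zero_mul_fromBlocks_diag]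
  have hFNA : ∀ k, FN k * A = G k := fun k => by rw [hA, hFN_mul, Matrix.mul_one]
  have hFNE : ∀ k, FN k * E = G (k + 1) := fun k => by rw [hE, hFN_mul, neg_mul, ← pow_succ]
  have hFNPl : ∀ k, FN k * Pl = 0 := fun k => by simp [hPl, hFN_mul]
  have hGν : G ν = 0 := by simp [G, hN]
  have hG0 : G 0 = -(1 - Pr) := by
    have hG0' : G 0 = -(Tinv * (1 - fromBlocks 1 0 0 0) * T) := by
      rw [one_sub_fromBlocks_one_zero, ← Matrix.neg_mul, ← Matrix.mul_neg, fromBlocks_neg]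
      simp [G]
    rw [hG0', Matrix.mul_sub, Matrix.sub_mul, Matrix.mul_one, hT', hPr]
  have hQ : Qpi = ∑ k ∈ Finset.range ν, (FN k)ᵀ * (M * Pp * M) * FN k := by
    simp only [hQpi, Matrix.mul_assoc]
  refine ⟨?_, by rw [hQ, transpose_mul_sum_mul_eq_zero hFNPl]⟩
  rw [hQ, transpose_mul_sum_mul_sub_eq_of_shift hFNA hFNE hGν, hG0]
  simp only [transpose_neg, Matrix.neg_mul, Matrix.mul_neg, neg_neg, Matrix.mul_assoc]

/-- The proper-improper observability Gramian
`Q_pi = ∑_{k<ν} F_N(k)ᵀ·M·P_p·M·F_N(k)` solves the projected generalized discrete-time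
Lyapunov equation `Aᵀ·Q_pi·A − Eᵀ·Q_pi·E = (I − P_r)ᵀ·M·P_p·M·(I − P_r)` together with
`P_lᵀ·Q_pi·P_l = 0`. -/
theorem proper_improper_observability_gramian
    {nf ni m : ℕ} (hm : 0 < m) (ν : ℕ) (hν : 0 < ν)
    -- Weierstraß canonical form data for the full-order system
    (W T Winv Tinv : Matrix (Fin nf ⊕ Fin ni) (Fin nf ⊕ Fin ni) ℝ)
    (hW : W * Winv = 1) (hW' : Winv * W = 1)
    (hT : T * Tinv = 1) (hT' : Tinv * T = 1)
    (J : Matrix (Fin nf) (Fin nf) ℝ) (N : Matrix (Fin ni) (Fin ni) ℝ) (hN : N ^ ν = 0)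
    (C α : ℝ) (hC : 0 < C) (hα : 0 < α)
    (hJ : ∀ t : ℝ, 0 ≤ t → opNorm (mexp (t • J)) ≤ C * Real.exp (-α * t))
    (E A : Matrix (Fin nf ⊕ Fin ni) (Fin nf ⊕ Fin ni) ℝ)
    (hE : E = W * fromBlocks 1 0 0 N * T)
    (hA : A = W * fromBlocks J 0 0 1 * T)
    (B : Matrix (Fin nf ⊕ Fin ni) (Fin m) ℝ)
    (M : Matrix (Fin nf ⊕ Fin ni) (Fin nf ⊕ Fin ni) ℝ) (hM : M.IsSymm)
    -- spectral projectors
    (Pr Pl : Matrix (Fin nf ⊕ Fin ni) (Fin nf ⊕ Fin ni) ℝ)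
    (hPr : Pr = Tinv * fromBlocks 1 0 0 0 * T)
    (hPl : Pl = W * fromBlocks 1 0 0 0 * Winv)
    -- fundamental solution matrices
    (FJ : ℝ → Matrix (Fin nf ⊕ Fin ni) (Fin nf ⊕ Fin ni) ℝ)
    (hFJ : ∀ t : ℝ, FJ t = Tinv * fromBlocks (mexp (t • J)) 0 0 0 * Winv)
    (FN : ℕ → Matrix (Fin nf ⊕ Fin ni) (Fin nf ⊕ Fin ni) ℝ)
    (hFN : ∀ k : ℕ, FN k = Tinv * fromBlocks 0 0 0 (-(N ^ k)) * Winv)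
    -- proper and improper controllability Gramians
    (Pp : Matrix (Fin nf ⊕ Fin ni) (Fin nf ⊕ Fin ni) ℝ)
    (hPp : Pp = matIntIoi fun t => FJ t * B * Bᵀ * (FJ t)ᵀ)
    (Pimp : Matrix (Fin nf ⊕ Fin ni) (Fin nf ⊕ Fin ni) ℝ)
    (hPimp : Pimp = ∑ k ∈ Finset.range ν, FN k * B * Bᵀ * (FN k)ᵀ)
    -- the proper-improper observability Gramian
    (Qpi : Matrix (Fin nf ⊕ Fin ni) (Fin nf ⊕ Fin ni) ℝ)
    (hQpi : Qpi = ∑ k ∈ Finset.range ν, (FN k)ᵀ * M * Pp * M * FN k) :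
    Aᵀ * Qpi * A - Eᵀ * Qpi * E = (1 - Pr)ᵀ * M * Pp * M * (1 - Pr) ∧
      Plᵀ * Qpi * Pl = 0 :=
  proper_improper_observability_gramian_general ν W T Winv Tinv hW' hT' J N hN E A hE hA M Pr Pl hPr
    hPl FN hFN Pp Qpi hQpi
end

section
/- The improper-improper observability Gramian Q_ii := Σ_{k=0}^{ν−1} F_N(k)^T·M·P_i·M·F_N(k) solves the projected generalized discrete-time Lyapunov equation A^T·Q_ii·A − E^T·Q_ii·E = (I − P_r)^T·M·P_i·M·(I − P_r) together with the projection condition P_l^T·Q_ii·P_l = 0. -/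
open MeasureTheory Matrix

/-! In Weierstraß coordinates `F_N(k)·A` and `F_N(k)·E` are `G k` and `G (k+1)` for
`G k := T⁻¹·diag(0, −N^k)·T`, so `Aᵀ·Q_ii·A − Eᵀ·Q_ii·E` telescopes to
`(G 0)ᵀ·M·P_i·M·(G 0) − (G ν)ᵀ·M·P_i·M·(G ν)`, where `G ν = 0` by nilpotency and
`G 0 = −(I − P_r)`. The projection condition holds because `F_N(k)·P_l = 0`. -/

section GramianSums

variable {R : Type*} [CommRing R] {ι l n p : Type*} [Fintype l] [Fintype n]

theorem transpose_mul_sum_mul_eq_sum (s : Finset ι) (F : ι → Matrix l n R)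
    (X : Matrix l l R) (Y : Matrix n p R) :
    Yᵀ * (∑ k ∈ s, (F k)ᵀ * X * F k) * Y = ∑ k ∈ s, (F k * Y)ᵀ * X * (F k * Y) := by
  rw [Matrix.mul_sum, Matrix.sum_mul]
  simp only [transpose_mul, Matrix.mul_assoc]

theorem transpose_mul_sum_mul_sub_eq_of_telescoping {ν : ℕ} (F G : ℕ → Matrix l n R)
    (X : Matrix l l R) (A E : Matrix n n R) (hA : ∀ k, F k * A = G k)
    (hE : ∀ k, F k * E = G (k + 1)) (hG : G ν = 0) :
    Aᵀ * (∑ k ∈ Finset.range ν, (F k)ᵀ * X * F k) * A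
        - Eᵀ * (∑ k ∈ Finset.range ν, (F k)ᵀ * X * F k) * E
      = (G 0)ᵀ * X * G 0 := by
  simp only [transpose_mul_sum_mul_eq_sum, hA, hE, ← Finset.sum_sub_distrib]
  rw [Finset.sum_range_sub' (fun k => (G k)ᵀ * X * G k), hG]
  simp

theorem transpose_mul_sum_mul_eq_zero_of_mul_eq_zero (s : Finset ι) (F : ι → Matrix l n R)
    (X : Matrix l l R) (P : Matrix n p R) (hP : ∀ k, F k * P = 0) :
    Pᵀ * (∑ k ∈ s, (F k)ᵀ * X * F k) * P = 0 := by
  simp [transpose_mul_sum_mul_eq_sum, hP]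

end GramianSums

theorem mul_mul_mul_mul_eq_of_mul_eq_one {α : Type*} [Monoid α] {w w' : α}
    (h : w' * w = 1) (a x y b : α) : (a * x * w') * (w * y * b) = a * (x * y) * b := by
  rw [show a * x * w' * (w * y * b) = a * x * (w' * w) * (y * b) by simp only [mul_assoc], h]
  simp only [mul_one, mul_assoc]

section BlockProjectors

variable {R : Type*} [CommRing R] {n₁ n₂ : Type*} [Fintype n₁] [Fintype n₂]
  [DecidableEq n₁] [DecidableEq n₂]

theorem one_sub_conj_fromBlocks_one_zero {T Tinv : Matrix (n₁ ⊕ n₂) (n₁ ⊕ n₂) R}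
    (hT : Tinv * T = 1) :
    1 - Tinv * fromBlocks 1 0 0 0 * T = Tinv * fromBlocks 0 0 0 1 * T := by
  have hdiag :
      (1 : Matrix (n₁ ⊕ n₂) (n₁ ⊕ n₂) R) - fromBlocks 1 0 0 0 = fromBlocks 0 0 0 1 := by
    rw [← fromBlocks_one, sub_eq_add_neg, fromBlocks_neg, fromBlocks_add]
    simp
  calc 1 - Tinv * fromBlocks 1 0 0 0 * T = Tinv * T - Tinv * fromBlocks 1 0 0 0 * T := by rw [hT]
    _ = Tinv * (1 - fromBlocks 1 0 0 0) * T := by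
      rw [Matrix.mul_sub, Matrix.sub_mul, Matrix.mul_one]
    _ = Tinv * fromBlocks 0 0 0 1 * T := by rw [hdiag]

end BlockProjectors

theorem improper_improper_observability_gramian_general
    {nf ni : ℕ} (ν : ℕ)
    -- Weierstraß canonical form data for the full-order system
    (W T Winv Tinv : Matrix (Fin nf ⊕ Fin ni) (Fin nf ⊕ Fin ni) ℝ)
    (hW' : Winv * W = 1)
    (hT' : Tinv * T = 1)
    (J : Matrix (Fin nf) (Fin nf) ℝ) (N : Matrix (Fin ni) (Fin ni) ℝ) (hN : N ^ ν = 0)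
    (E A : Matrix (Fin nf ⊕ Fin ni) (Fin nf ⊕ Fin ni) ℝ)
    (hE : E = W * fromBlocks 1 0 0 N * T)
    (hA : A = W * fromBlocks J 0 0 1 * T)
    (M : Matrix (Fin nf ⊕ Fin ni) (Fin nf ⊕ Fin ni) ℝ)
    -- spectral projectors
    (Pr Pl : Matrix (Fin nf ⊕ Fin ni) (Fin nf ⊕ Fin ni) ℝ)
    (hPr : Pr = Tinv * fromBlocks 1 0 0 0 * T)
    (hPl : Pl = W * fromBlocks 1 0 0 0 * Winv)
    -- fundamental solution matrices
    (FN : ℕ → Matrix (Fin nf ⊕ Fin ni) (Fin nf ⊕ Fin ni) ℝ)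
    (hFN : ∀ k : ℕ, FN k = Tinv * fromBlocks 0 0 0 (-(N ^ k)) * Winv)
    -- proper and improper controllability Gramians
    (Pimp : Matrix (Fin nf ⊕ Fin ni) (Fin nf ⊕ Fin ni) ℝ)
    -- the improper-improper observability Gramian
    (Qii : Matrix (Fin nf ⊕ Fin ni) (Fin nf ⊕ Fin ni) ℝ)
    (hQii : Qii = ∑ k ∈ Finset.range ν, (FN k)ᵀ * M * Pimp * M * FN k) :
    Aᵀ * Qii * A - Eᵀ * Qii * E = (1 - Pr)ᵀ * M * Pimp * M * (1 - Pr) ∧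
      Plᵀ * Qii * Pl = 0 := by
  set G : ℕ → Matrix (Fin nf ⊕ Fin ni) (Fin nf ⊕ Fin ni) ℝ :=
    fun k => Tinv * fromBlocks 0 0 0 (-(N ^ k)) * T
  have hFNA : ∀ k, FN k * A = G k := fun k => by
    rw [hFN, hA, mul_mul_mul_mul_eq_of_mul_eq_one hW']
    simp [G, fromBlocks_multiply]
  have hFNE : ∀ k, FN k * E = G (k + 1) := fun k => by
    rw [hFN, hE, mul_mul_mul_mul_eq_of_mul_eq_one hW']
    simp [G, fromBlocks_multiply, pow_succ]
  have hFNPl : ∀ k, FN k * Pl = 0 := fun k => by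
    rw [hFN, hPl, mul_mul_mul_mul_eq_of_mul_eq_one hW']
    simp [fromBlocks_multiply]
  have hGν : G ν = 0 := by simp [G, hN]
  have hG0 : G 0 = -(1 - Pr) := by
    have hneg :
        fromBlocks (0 : Matrix (Fin nf) (Fin nf) ℝ) 0 0 (-1 : Matrix (Fin ni) (Fin ni) ℝ)
          = -fromBlocks 0 0 0 1 := by
      simp [fromBlocks_neg]
    rw [hPr, one_sub_conj_fromBlocks_one_zero hT']
    simp only [G, pow_zero, hneg, Matrix.mul_neg, Matrix.neg_mul]
  have hQ : Qii = ∑ k ∈ Finset.range ν, (FN k)ᵀ * (M * Pimp * M) * FN k := by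
    simp only [hQii, Matrix.mul_assoc]
  rw [hQ]
  refine ⟨?_, transpose_mul_sum_mul_eq_zero_of_mul_eq_zero _ _ _ _ hFNPl⟩
  rw [transpose_mul_sum_mul_sub_eq_of_telescoping FN G _ A E hFNA hFNE hGν, hG0]
  simp only [transpose_neg, Matrix.neg_mul, Matrix.mul_neg, neg_neg, Matrix.mul_assoc]

/-- The improper-improper observability Gramian
`Q_ii = ∑_{k<ν} F_N(k)ᵀ·M·P_i·M·F_N(k)` solves the projected generalized discrete-time
Lyapunov equation `Aᵀ·Q_ii·A − Eᵀ·Q_ii·E = (I − P_r)ᵀ·M·P_i·M·(I − P_r)` together with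
`P_lᵀ·Q_ii·P_l = 0`. -/
theorem improper_improper_observability_gramian
    {nf ni m : ℕ} (hm : 0 < m) (ν : ℕ) (hν : 0 < ν)
    -- Weierstraß canonical form data for the full-order system
    (W T Winv Tinv : Matrix (Fin nf ⊕ Fin ni) (Fin nf ⊕ Fin ni) ℝ)
    (hW : W * Winv = 1) (hW' : Winv * W = 1)
    (hT : T * Tinv = 1) (hT' : Tinv * T = 1)
    (J : Matrix (Fin nf) (Fin nf) ℝ) (N : Matrix (Fin ni) (Fin ni) ℝ) (hN : N ^ ν = 0)
    (C α : ℝ) (hC : 0 < C) (hα : 0 < α)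
    (hJ : ∀ t : ℝ, 0 ≤ t → opNorm (mexp (t • J)) ≤ C * Real.exp (-α * t))
    (E A : Matrix (Fin nf ⊕ Fin ni) (Fin nf ⊕ Fin ni) ℝ)
    (hE : E = W * fromBlocks 1 0 0 N * T)
    (hA : A = W * fromBlocks J 0 0 1 * T)
    (B : Matrix (Fin nf ⊕ Fin ni) (Fin m) ℝ)
    (M : Matrix (Fin nf ⊕ Fin ni) (Fin nf ⊕ Fin ni) ℝ) (hM : M.IsSymm)
    -- spectral projectors
    (Pr Pl : Matrix (Fin nf ⊕ Fin ni) (Fin nf ⊕ Fin ni) ℝ)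
    (hPr : Pr = Tinv * fromBlocks 1 0 0 0 * T)
    (hPl : Pl = W * fromBlocks 1 0 0 0 * Winv)
    -- fundamental solution matrices
    (FJ : ℝ → Matrix (Fin nf ⊕ Fin ni) (Fin nf ⊕ Fin ni) ℝ)
    (hFJ : ∀ t : ℝ, FJ t = Tinv * fromBlocks (mexp (t • J)) 0 0 0 * Winv)
    (FN : ℕ → Matrix (Fin nf ⊕ Fin ni) (Fin nf ⊕ Fin ni) ℝ)
    (hFN : ∀ k : ℕ, FN k = Tinv * fromBlocks 0 0 0 (-(N ^ k)) * Winv)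
    -- proper and improper controllability Gramians
    (Pp : Matrix (Fin nf ⊕ Fin ni) (Fin nf ⊕ Fin ni) ℝ)
    (hPp : Pp = matIntIoi fun t => FJ t * B * Bᵀ * (FJ t)ᵀ)
    (Pimp : Matrix (Fin nf ⊕ Fin ni) (Fin nf ⊕ Fin ni) ℝ)
    (hPimp : Pimp = ∑ k ∈ Finset.range ν, FN k * B * Bᵀ * (FN k)ᵀ)
    -- the improper-improper observability Gramian
    (Qii : Matrix (Fin nf ⊕ Fin ni) (Fin nf ⊕ Fin ni) ℝ)
    (hQii : Qii = ∑ k ∈ Finset.range ν, (FN k)ᵀ * M * Pimp * M * FN k) :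
    Aᵀ * Qii * A - Eᵀ * Qii * E = (1 - Pr)ᵀ * M * Pimp * M * (1 - Pr) ∧
      Plᵀ * Qii * Pl = 0 :=
  improper_improper_observability_gramian_general ν W T Winv Tinv hW' hT' J N hN E A hE hA M Pr Pl
    hPr hPl FN hFN Pimp Qii hQii
end

section
/- The cross term of the proper-proper kernels satisfies ∫₀^∞∫₀^∞ ⟨h_pp(t₁,t₂), ĥ_pp(t₁,t₂)⟩ dt₁ dt₂ = trace(P̃_p^T·M·P̃_p·M̂), where P̃_p := ∫₀^∞ F_J(t)·B·B̂^T·F̂_J(t)^T dt and ⟨·,·⟩ is the Euclidean inner product on ℝ^{m²}. -/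
open MeasureTheory Matrix

/-! With `Φ(t) = F_J(t) B B̂ᵀ F̂_J(t)ᵀ`, the identity `⟨vec X, vec Y⟩ = tr(Xᵀ Y)`, the symmetry of `M`
and cyclicity of the trace turn the integrand into `tr(Φ(t₂)ᵀ M Φ(t₁) M̂)`, which is linear in
`Φ(t₁)` and in `Φ(t₂)` separately. Each of the two integrals therefore passes inside the trace,
replacing `Φ` by `P̃_p = ∫₀^∞ Φ`. This needs `Φ` to be entrywise integrable on `(0, ∞)`: its entries
are continuous and `O(exp(-(α + α̂) t))`, because entries of `exp(tJ)` and `exp(tÂ₁)` are bounded by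
their operator norms. -/

open Asymptotics Filter

section Entrywise

variable {a b c : Type*}

def EntrywiseIsBigO (F : ℝ → Matrix a b ℝ) (g : ℝ → ℝ) : Prop :=
  ∀ i j, (fun t => F t i j) =O[atTop] g

namespace EntrywiseIsBigO

theorem const (K : Matrix a b ℝ) : EntrywiseIsBigO (fun _ => K) fun _ => 1 :=
  fun _ _ => isBigO_const_const _ one_ne_zero _

theorem mul [Fintype b] {F : ℝ → Matrix a b ℝ} {G : ℝ → Matrix b c ℝ} {f g : ℝ → ℝ}
    (hF : EntrywiseIsBigO F f) (hG : EntrywiseIsBigO G g) :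
    EntrywiseIsBigO (fun t => F t * G t) fun t => f t * g t := fun i k => by
  simp only [Matrix.mul_apply]
  exact IsBigO.fun_sum fun j _ => (hF i j).mul (hG j k)

theorem transpose {F : ℝ → Matrix a b ℝ} {f : ℝ → ℝ} (hF : EntrywiseIsBigO F f) :
    EntrywiseIsBigO (fun t => (F t)ᵀ) f :=
  fun i j => hF j i

theorem trans_isBigO {F : ℝ → Matrix a b ℝ} {f g : ℝ → ℝ} (hF : EntrywiseIsBigO F f)
    (hfg : f =O[atTop] g) : EntrywiseIsBigO F g :=
  fun i j => (hF i j).trans hfg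

theorem fromBlocks_zero {a' b' : Type*} {F : ℝ → Matrix a b ℝ} {f : ℝ → ℝ}
    (hF : EntrywiseIsBigO F f) :
    EntrywiseIsBigO (fun t => fromBlocks (F t) 0 0 (0 : Matrix a' b' ℝ)) f := by
  rintro (i | i) (j | j)
  · exact hF i j
  all_goals exact isBigO_zero _ _

theorem matIntegrableIoi {F : ℝ → Matrix a b ℝ} {β : ℝ} (hβ : 0 < β) (hcont : Continuous F)
    (hF : EntrywiseIsBigO F fun t => Real.exp (-β * t)) : MatIntegrableIoi F := fun i j =>
  integrable_of_isBigO_exp_neg hβ (hcont.matrix_elem i j).continuousOn (hF i j)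

end EntrywiseIsBigO

end Entrywise

section MatrixExponential

variable {d : ℕ}

theorem continuous_mexp_smul (X : Matrix (Fin d) (Fin d) ℝ) :
    Continuous fun t : ℝ => mexp (t • X) := by
  let := Matrix.instL2OpNormedRing (n := Fin d) (𝕜 := ℝ)
  let := Matrix.instL2OpNormedAlgebra (n := Fin d) (𝕜 := ℝ)
  let : NormedAlgebra ℚ (Matrix (Fin d) (Fin d) ℝ) := .restrictScalars ℚ ℝ _
  exact NormedSpace.exp_continuous.comp (continuous_id.smul continuous_const)

theorem abs_entry_le_opNorm {e : ℕ} (X : Matrix (Fin d) (Fin e) ℝ) (i : Fin d) (j : Fin e) :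
    |X i j| ≤ opNorm X := by
  let := Matrix.instL2OpNormedAddCommGroup (m := Fin d) (n := Fin e) (𝕜 := ℝ)
  set v := (EuclideanSpace.equiv (Fin d) ℝ).symm (X *ᵥ EuclideanSpace.single j (1 : ℝ))
  have hvi : v i = X i j := by
    show (X *ᵥ Pi.single j 1) i = X i j
    simp [Matrix.mulVec_single]
  calc |X i j| = |inner ℝ (EuclideanSpace.single i (1 : ℝ)) v| := by
        rw [EuclideanSpace.inner_single_left, hvi]; simp
    _ ≤ ‖v‖ := by simpa using abs_real_inner_le_norm (EuclideanSpace.single i (1 : ℝ)) v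
    _ ≤ ‖X‖ * ‖EuclideanSpace.single j (1 : ℝ)‖ := Matrix.l2_opNorm_mulVec X _
    _ = opNorm X := by rw [PiLp.norm_single, norm_one, mul_one]; rfl

theorem entrywiseIsBigO_mexp_smul {X : Matrix (Fin d) (Fin d) ℝ} {C β : ℝ}
    (hX : ∀ t : ℝ, 0 ≤ t → opNorm (mexp (t • X)) ≤ C * Real.exp (-β * t)) :
    EntrywiseIsBigO (fun t => mexp (t • X)) fun t => Real.exp (-β * t) := fun i j =>
  IsBigO.of_bound C <| (eventually_ge_atTop 0).mono fun t ht => by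
    rw [Real.norm_eq_abs, Real.norm_of_nonneg (Real.exp_pos _).le]
    exact (abs_entry_le_opNorm _ i j).trans (hX t ht)

end MatrixExponential

section Trace

variable {n r : Type*} [Fintype n] [Fintype r]

theorem dotv_vecm {k : ℕ} (X Y : Matrix (Fin k) (Fin k) ℝ) :
    dotv (vecm X) (vecm Y) = trace (Xᵀ * Y) := by
  simp only [dotv, vecm, trace, diag, mul_apply, transpose_apply, Fintype.sum_prod_type]
  exact Finset.sum_comm

theorem trace_transpose_mul_kernel {k : Type*} [Fintype k] {M : Matrix n n ℝ} (hM : M.IsSymm)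
    (Mr : Matrix r r ℝ) (F₁ F₂ : Matrix n n ℝ) (G₁ G₂ : Matrix r r ℝ) (B : Matrix n k ℝ)
    (Br : Matrix r k ℝ) :
    trace ((Bᵀ * F₁ᵀ * M * F₂ * B)ᵀ * (Brᵀ * G₁ᵀ * Mr * G₂ * Br)) =
      trace ((F₂ * B * Brᵀ * G₂ᵀ)ᵀ * (M * (F₁ * B * Brᵀ * G₁ᵀ) * Mr)) := by
  have hlhs : (Bᵀ * F₁ᵀ * M * F₂ * B)ᵀ * (Brᵀ * G₁ᵀ * Mr * G₂ * Br) =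
      (Bᵀ * F₂ᵀ) * ((M * (F₁ * B * Brᵀ * G₁ᵀ) * Mr) * (G₂ * Br)) := by
    simp only [transpose_mul, transpose_transpose, hM.eq, Matrix.mul_assoc]
  have hrhs : (F₂ * B * Brᵀ * G₂ᵀ)ᵀ * (M * (F₁ * B * Brᵀ * G₁ᵀ) * Mr) =
      (G₂ * Br) * (Bᵀ * F₂ᵀ) * (M * (F₁ * B * Brᵀ * G₁ᵀ) * Mr) := by
    simp only [transpose_mul, transpose_transpose, Matrix.mul_assoc]
  rw [hlhs, hrhs, trace_mul_comm, Matrix.mul_assoc, trace_mul_comm]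

theorem integral_trace_mul {Φ : ℝ → Matrix n r ℝ} (hΦ : MatIntegrableIoi Φ) (K : Matrix r n ℝ) :
    ∫ t in Set.Ioi 0, trace (Φ t * K) = trace (matIntIoi Φ * K) := by
  simp only [trace, diag, mul_apply, matIntIoi, of_apply]
  rw [integral_finsetSum _ fun i _ => integrable_finsetSum _ fun j _ => (hΦ i j).mul_const _]
  refine Finset.sum_congr rfl fun i _ => ?_
  rw [integral_finsetSum _ fun j _ => (hΦ i j).mul_const _]
  exact Finset.sum_congr rfl fun j _ => integral_mul_const _ _

theorem integral_trace_transpose_mul {Φ : ℝ → Matrix n r ℝ} (hΦ : MatIntegrableIoi Φ)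
    (K : Matrix n r ℝ) :
    ∫ t in Set.Ioi 0, trace ((Φ t)ᵀ * K) = trace ((matIntIoi Φ)ᵀ * K) := by
  have htranspose (X : Matrix n r ℝ) : trace (Xᵀ * K) = trace (X * Kᵀ) := by
    rw [← trace_transpose_mul, transpose_transpose]
  simp only [htranspose]
  exact integral_trace_mul hΦ Kᵀ

theorem integral_integral_trace_transpose_mul {Φ : ℝ → Matrix n r ℝ} (hΦ : MatIntegrableIoi Φ)
    (M : Matrix n n ℝ) (Mr : Matrix r r ℝ) :
    ∫ t₁ in Set.Ioi 0, ∫ t₂ in Set.Ioi 0, trace ((Φ t₂)ᵀ * (M * Φ t₁ * Mr)) =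
      trace ((matIntIoi Φ)ᵀ * M * matIntIoi Φ * Mr) := by
  have hcycle (X : Matrix n r ℝ) :
      trace ((matIntIoi Φ)ᵀ * (M * X * Mr)) = trace (X * (Mr * (matIntIoi Φ)ᵀ * M)) := by
    simp only [← Matrix.mul_assoc]
    rw [Matrix.mul_assoc _ X Mr, trace_mul_comm]
    simp only [Matrix.mul_assoc]
  calc ∫ t₁ in Set.Ioi 0, ∫ t₂ in Set.Ioi 0, trace ((Φ t₂)ᵀ * (M * Φ t₁ * Mr))
      = ∫ t₁ in Set.Ioi 0, trace (Φ t₁ * (Mr * (matIntIoi Φ)ᵀ * M)) := by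
        simp only [integral_trace_transpose_mul hΦ, hcycle]
    _ = trace (matIntIoi Φ * (Mr * (matIntIoi Φ)ᵀ * M)) := integral_trace_mul hΦ _
    _ = trace ((matIntIoi Φ)ᵀ * M * matIntIoi Φ * Mr) := by
        rw [trace_mul_comm]
        simp only [Matrix.mul_assoc]
        rw [trace_mul_comm]
        simp only [Matrix.mul_assoc]

end Trace

theorem matIntegrableIoi_mixed_gramian_integrand {nf rf : ℕ} {ι κ n k : Type*} [Fintype ι]
    [Fintype κ] [Fintype k]
    (Tinv : Matrix n (Fin nf ⊕ ι) ℝ) (Winv : Matrix (Fin nf ⊕ ι) (Fin nf ⊕ ι) ℝ)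
    (J : Matrix (Fin nf) (Fin nf) ℝ) (A1r : Matrix (Fin rf) (Fin rf) ℝ)
    (B : Matrix (Fin nf ⊕ ι) k ℝ) (Br : Matrix (Fin rf ⊕ κ) k ℝ) {C α Cr αr : ℝ}
    (hα : 0 < α) (hαr : 0 < αr)
    (hJ : ∀ t : ℝ, 0 ≤ t → opNorm (mexp (t • J)) ≤ C * Real.exp (-α * t))
    (hA1r : ∀ t : ℝ, 0 ≤ t → opNorm (mexp (t • A1r)) ≤ Cr * Real.exp (-αr * t)) :
    MatIntegrableIoi fun t => Tinv *
      (fromBlocks (mexp (t • J)) 0 0 0 : Matrix (Fin nf ⊕ ι) (Fin nf ⊕ ι) ℝ) * Winv * B * Brᵀ *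
      (fromBlocks (mexp (t • A1r)) 0 0 0 : Matrix (Fin rf ⊕ κ) (Fin rf ⊕ κ) ℝ)ᵀ := by
  have := continuous_mexp_smul J
  have := continuous_mexp_smul A1r
  refine EntrywiseIsBigO.matIntegrableIoi (add_pos hα hαr) (by fun_prop) ?_
  refine ((((((EntrywiseIsBigO.const Tinv).mul
    (entrywiseIsBigO_mexp_smul hJ).fromBlocks_zero).mul (.const Winv)).mul (.const B)).mul
    (.const Brᵀ)).mul (entrywiseIsBigO_mexp_smul hA1r).fromBlocks_zero.transpose).trans_isBigO ?_
  refine (isBigO_refl _ _).congr_left fun t => ?_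
  rw [neg_add, add_mul, Real.exp_add]
  ring

theorem proper_proper_kernel_cross_term_eq_trace_general
    {nf ni m : ℕ}
    -- Weierstraß canonical form data for the full-order system
    (Winv Tinv : Matrix (Fin nf ⊕ Fin ni) (Fin nf ⊕ Fin ni) ℝ)
    (J : Matrix (Fin nf) (Fin nf) ℝ)
    (C α : ℝ) (hα : 0 < α)
    (hJ : ∀ t : ℝ, 0 ≤ t → opNorm (mexp (t • J)) ≤ C * Real.exp (-α * t))
    (B : Matrix (Fin nf ⊕ Fin ni) (Fin m) ℝ)
    (M : Matrix (Fin nf ⊕ Fin ni) (Fin nf ⊕ Fin ni) ℝ) (hM : M.IsSymm)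
    -- fundamental solution matrices
    (FJ : ℝ → Matrix (Fin nf ⊕ Fin ni) (Fin nf ⊕ Fin ni) ℝ)
    (hFJ : ∀ t : ℝ, FJ t = Tinv * fromBlocks (mexp (t • J)) 0 0 0 * Winv)
    -- reduced-order data
    {rf ri : ℕ}
    (A1r : Matrix (Fin rf) (Fin rf) ℝ)
    (Cr αr : ℝ) (hαr : 0 < αr)
    (hA1r : ∀ t : ℝ, 0 ≤ t → opNorm (mexp (t • A1r)) ≤ Cr * Real.exp (-αr * t))
    (Br : Matrix (Fin rf ⊕ Fin ri) (Fin m) ℝ)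
    (Mr : Matrix (Fin rf ⊕ Fin ri) (Fin rf ⊕ Fin ri) ℝ)
    (FJr : ℝ → Matrix (Fin rf ⊕ Fin ri) (Fin rf ⊕ Fin ri) ℝ)
    (hFJr : ∀ t : ℝ, FJr t = fromBlocks (mexp (t • A1r)) 0 0 0)
    -- proper-proper kernels of the full-order and reduced-order systems
    (hpp : ℝ → ℝ → Fin m × Fin m → ℝ)
    (hhpp : ∀ t1 t2 : ℝ, hpp t1 t2 = vecm (Bᵀ * (FJ t1)ᵀ * M * FJ t2 * B))
    (hppr : ℝ → ℝ → Fin m × Fin m → ℝ)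
    (hhppr : ∀ t1 t2 : ℝ, hppr t1 t2 = vecm (Brᵀ * (FJr t1)ᵀ * Mr * FJr t2 * Br))
    -- the mixed proper Gramian
    (Ptp : Matrix (Fin nf ⊕ Fin ni) (Fin rf ⊕ Fin ri) ℝ)
    (hPtp : Ptp = matIntIoi fun t => FJ t * B * Brᵀ * (FJr t)ᵀ) :
    (∫ t1 in Set.Ioi (0:ℝ), ∫ t2 in Set.Ioi (0:ℝ), dotv (hpp t1 t2) (hppr t1 t2)) =
      Matrix.trace (Ptpᵀ * M * Ptp * Mr) := by
  set Φ : ℝ → Matrix (Fin nf ⊕ Fin ni) (Fin rf ⊕ Fin ri) ℝ := fun t => FJ t * B * Brᵀ * (FJr t)ᵀ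
  have hΦ : MatIntegrableIoi Φ := by
    simpa only [Φ, hFJ, hFJr] using
      matIntegrableIoi_mixed_gramian_integrand Tinv Winv J A1r B Br hα hαr hJ hA1r
  have hkernel (t₁ t₂ : ℝ) :
      dotv (hpp t₁ t₂) (hppr t₁ t₂) = trace ((Φ t₂)ᵀ * (M * Φ t₁ * Mr)) := by
    rw [hhpp, hhppr, dotv_vecm, trace_transpose_mul_kernel hM]
  simp only [hkernel, hPtp]
  exact integral_integral_trace_transpose_mul hΦ M Mr

/-- The cross term of the proper-proper kernels satisfies
`∫₀^∞∫₀^∞ ⟨h_pp, ĥ_pp⟩ dt₁ dt₂ = trace(P̃_pᵀ·M·P̃_p·M̂)` with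
`P̃_p = ∫₀^∞ F_J(t)·B·B̂ᵀ·F̂_J(t)ᵀ dt`. -/
theorem proper_proper_kernel_cross_term_eq_trace
    {nf ni m : ℕ} (hm : 0 < m) (ν : ℕ) (hν : 0 < ν)
    -- Weierstraß canonical form data for the full-order system
    (W T Winv Tinv : Matrix (Fin nf ⊕ Fin ni) (Fin nf ⊕ Fin ni) ℝ)
    (hW : W * Winv = 1) (hW' : Winv * W = 1)
    (hT : T * Tinv = 1) (hT' : Tinv * T = 1)
    (J : Matrix (Fin nf) (Fin nf) ℝ) (N : Matrix (Fin ni) (Fin ni) ℝ) (hN : N ^ ν = 0)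
    (C α : ℝ) (hC : 0 < C) (hα : 0 < α)
    (hJ : ∀ t : ℝ, 0 ≤ t → opNorm (mexp (t • J)) ≤ C * Real.exp (-α * t))
    (E A : Matrix (Fin nf ⊕ Fin ni) (Fin nf ⊕ Fin ni) ℝ)
    (hE : E = W * fromBlocks 1 0 0 N * T)
    (hA : A = W * fromBlocks J 0 0 1 * T)
    (B : Matrix (Fin nf ⊕ Fin ni) (Fin m) ℝ)
    (M : Matrix (Fin nf ⊕ Fin ni) (Fin nf ⊕ Fin ni) ℝ) (hM : M.IsSymm)
    -- spectral projectors
    (Pr Pl : Matrix (Fin nf ⊕ Fin ni) (Fin nf ⊕ Fin ni) ℝ)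
    (hPr : Pr = Tinv * fromBlocks 1 0 0 0 * T)
    (hPl : Pl = W * fromBlocks 1 0 0 0 * Winv)
    -- fundamental solution matrices
    (FJ : ℝ → Matrix (Fin nf ⊕ Fin ni) (Fin nf ⊕ Fin ni) ℝ)
    (hFJ : ∀ t : ℝ, FJ t = Tinv * fromBlocks (mexp (t • J)) 0 0 0 * Winv)
    (FN : ℕ → Matrix (Fin nf ⊕ Fin ni) (Fin nf ⊕ Fin ni) ℝ)
    (hFN : ∀ k : ℕ, FN k = Tinv * fromBlocks 0 0 0 (-(N ^ k)) * Winv)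
    -- proper and improper controllability Gramians
    (Pp : Matrix (Fin nf ⊕ Fin ni) (Fin nf ⊕ Fin ni) ℝ)
    (hPp : Pp = matIntIoi fun t => FJ t * B * Bᵀ * (FJ t)ᵀ)
    (Pimp : Matrix (Fin nf ⊕ Fin ni) (Fin nf ⊕ Fin ni) ℝ)
    (hPimp : Pimp = ∑ k ∈ Finset.range ν, FN k * B * Bᵀ * (FN k)ᵀ)
    -- reduced-order data
    {rf ri : ℕ}
    (A1r : Matrix (Fin rf) (Fin rf) ℝ) (E2r : Matrix (Fin ri) (Fin ri) ℝ) (hE2r : E2r ^ ν = 0)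
    (Cr αr : ℝ) (hCr : 0 < Cr) (hαr : 0 < αr)
    (hA1r : ∀ t : ℝ, 0 ≤ t → opNorm (mexp (t • A1r)) ≤ Cr * Real.exp (-αr * t))
    (Br : Matrix (Fin rf ⊕ Fin ri) (Fin m) ℝ)
    (Mr : Matrix (Fin rf ⊕ Fin ri) (Fin rf ⊕ Fin ri) ℝ) (hMr : Mr.IsSymm)
    (FJr : ℝ → Matrix (Fin rf ⊕ Fin ri) (Fin rf ⊕ Fin ri) ℝ)
    (hFJr : ∀ t : ℝ, FJr t = fromBlocks (mexp (t • A1r)) 0 0 0)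
    (FNr : ℕ → Matrix (Fin rf ⊕ Fin ri) (Fin rf ⊕ Fin ri) ℝ)
    (hFNr : ∀ k : ℕ, FNr k = fromBlocks 0 0 0 (-(E2r ^ k)))
    -- proper-proper kernels of the full-order and reduced-order systems
    (hpp : ℝ → ℝ → Fin m × Fin m → ℝ)
    (hhpp : ∀ t1 t2 : ℝ, hpp t1 t2 = vecm (Bᵀ * (FJ t1)ᵀ * M * FJ t2 * B))
    (hppr : ℝ → ℝ → Fin m × Fin m → ℝ)
    (hhppr : ∀ t1 t2 : ℝ, hppr t1 t2 = vecm (Brᵀ * (FJr t1)ᵀ * Mr * FJr t2 * Br))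
    -- the mixed proper Gramian
    (Ptp : Matrix (Fin nf ⊕ Fin ni) (Fin rf ⊕ Fin ri) ℝ)
    (hPtp : Ptp = matIntIoi fun t => FJ t * B * Brᵀ * (FJr t)ᵀ) :
    (∫ t1 in Set.Ioi (0:ℝ), ∫ t2 in Set.Ioi (0:ℝ), dotv (hpp t1 t2) (hppr t1 t2)) =
      Matrix.trace (Ptpᵀ * M * Ptp * Mr) :=
  proper_proper_kernel_cross_term_eq_trace_general Winv Tinv J C α hα hJ B M hM FJ hFJ A1r Cr αr hαr
    hA1r Br Mr FJr hFJr hpp hhpp hppr hhppr Ptp hPtp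
end

section
/- The mixed improper Gramian P̃_i := Σ_{k=0}^{ν−1} F_N(k)·B·B̂^T·F̂_N(k)^T solves the projected generalized discrete-time Sylvester equation A·P̃_i·Â^T − E·P̃_i·Ê^T = (I − P_l)·B·B̂^T·(I − P̂_l)^T together with the projection condition P_r·P̃_i·P̂_r^T = 0. -/
open MeasureTheory Matrix

/-!
In Weierstraß coordinates `A·F_N(k) = −W·diag(0, N^k)·W⁻¹` and `E·F_N(k) = A·F_N(k+1)`, while on
the reduced side `Â·F̂_N(k) = F̂_N(k)` and `Ê·F̂_N(k) = F̂_N(k+1)`. Hence the Sylvester residual of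
the Gramian telescopes to its `k = 0` term minus its `k = ν` term; the latter vanishes since
`N^ν = 0`, and `A·F_N(0) = P_l − I`, `F̂_N(0) = P̂_l − I`. The projection condition holds termwise
because `P_r·F_N(k) = 0`.
-/

section MatrixIdentities

variable {R : Type*} [CommRing R] {l m n p q r s : Type*}

theorem mul_mul_mul_mul_of_mul_eq_one_s15 [Fintype n] [Fintype p] [Fintype q] [Fintype r]
    [DecidableEq p]
    {S : Matrix p q R} {Sinv : Matrix q p R} (hS : S * Sinv = 1)
    (X : Matrix l n R) (P : Matrix n p R) (Q : Matrix p r R) (Y : Matrix r s R) :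
    X * P * S * (Sinv * Q * Y) = X * (P * Q) * Y := by
  simp only [Matrix.mul_assoc]
  rw [← Matrix.mul_assoc S, hS, Matrix.one_mul]

theorem mul_sub_one_mul_of_mul_eq_one [Fintype n] [DecidableEq n]
    {W Winv : Matrix n n R} (hW : W * Winv = 1) (P : Matrix n n R) :
    W * (P - 1) * Winv = W * P * Winv - 1 := by
  rw [Matrix.mul_sub, Matrix.sub_mul, Matrix.mul_one, hW]

theorem fromBlocks_mul_fromBlocks_zero_zero_zero [Fintype l] [Fintype m]
    (P : Matrix n l R) (Q : Matrix p m R) (Z : Matrix m q R) :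
    fromBlocks P 0 0 Q * fromBlocks (0 : Matrix l r R) 0 0 Z = fromBlocks 0 0 0 (Q * Z) := by
  simp [fromBlocks_multiply]

theorem fromBlocks_one_zero_zero_zero_sub_one [DecidableEq l] [DecidableEq m] :
    fromBlocks (1 : Matrix l l R) 0 0 0 - 1 = fromBlocks 0 0 0 (-1 : Matrix m m R) := by
  ext (i | i) (j | j) <;> simp [one_apply]

theorem sylvester_residual_sum_eq_sub [Fintype n] [Fintype p] [Fintype q] [Fintype r] [Fintype s]
    (A E : Matrix n n R) (Ar Er : Matrix r r R) (F : ℕ → Matrix n p R) (Fr : ℕ → Matrix r q R)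
    (B : Matrix p s R) (Br : Matrix q s R)
    (hEF : ∀ k, E * F k = A * F (k + 1)) (hArFr : ∀ k, Ar * Fr k = Fr k)
    (hErFr : ∀ k, Er * Fr k = Fr (k + 1)) (ν : ℕ) :
    A * (∑ k ∈ Finset.range ν, F k * B * Brᵀ * (Fr k)ᵀ) * Arᵀ
        - E * (∑ k ∈ Finset.range ν, F k * B * Brᵀ * (Fr k)ᵀ) * Erᵀ
      = A * F 0 * B * Brᵀ * (Fr 0)ᵀ - A * F ν * B * Brᵀ * (Fr ν)ᵀ := by
  have hterm : ∀ (X : Matrix n n R) (Y : Matrix r r R) k,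
      X * (F k * B * Brᵀ * (Fr k)ᵀ) * Yᵀ = X * F k * B * Brᵀ * (Y * Fr k)ᵀ := by
    intro X Y k
    simp only [transpose_mul, Matrix.mul_assoc]
  simp only [Matrix.mul_sum, Matrix.sum_mul, ← Finset.sum_sub_distrib, hterm, hArFr, hErFr, hEF]
  exact Finset.sum_range_sub' (fun k => A * F k * B * Brᵀ * (Fr k)ᵀ) ν

end MatrixIdentities

theorem mixed_improper_gramian_sylvester_general
    {nf ni m : ℕ} (ν : ℕ)
    -- Weierstraß canonical form data for the full-order system
    (W T Winv Tinv : Matrix (Fin nf ⊕ Fin ni) (Fin nf ⊕ Fin ni) ℝ)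
    (hW : W * Winv = 1)
    (hT : T * Tinv = 1)
    (J : Matrix (Fin nf) (Fin nf) ℝ) (N : Matrix (Fin ni) (Fin ni) ℝ) (hN : N ^ ν = 0)
    (E A : Matrix (Fin nf ⊕ Fin ni) (Fin nf ⊕ Fin ni) ℝ)
    (hE : E = W * fromBlocks 1 0 0 N * T)
    (hA : A = W * fromBlocks J 0 0 1 * T)
    (B : Matrix (Fin nf ⊕ Fin ni) (Fin m) ℝ)
    -- spectral projectors
    (Pr Pl : Matrix (Fin nf ⊕ Fin ni) (Fin nf ⊕ Fin ni) ℝ)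
    (hPr : Pr = Tinv * fromBlocks 1 0 0 0 * T)
    (hPl : Pl = W * fromBlocks 1 0 0 0 * Winv)
    -- fundamental solution matrices
    (FN : ℕ → Matrix (Fin nf ⊕ Fin ni) (Fin nf ⊕ Fin ni) ℝ)
    (hFN : ∀ k : ℕ, FN k = Tinv * fromBlocks 0 0 0 (-(N ^ k)) * Winv)
    -- reduced-order data
    {rf ri : ℕ}
    (A1r : Matrix (Fin rf) (Fin rf) ℝ) (E2r : Matrix (Fin ri) (Fin ri) ℝ)
    (Br : Matrix (Fin rf ⊕ Fin ri) (Fin m) ℝ)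
    (FNr : ℕ → Matrix (Fin rf ⊕ Fin ri) (Fin rf ⊕ Fin ri) ℝ)
    (hFNr : ∀ k : ℕ, FNr k = fromBlocks 0 0 0 (-(E2r ^ k)))
    -- reduced-order matrices and projectors
    (Er Ar : Matrix (Fin rf ⊕ Fin ri) (Fin rf ⊕ Fin ri) ℝ)
    (hEr : Er = fromBlocks 1 0 0 E2r) (hAr : Ar = fromBlocks A1r 0 0 1)
    (Plr Prr : Matrix (Fin rf ⊕ Fin ri) (Fin rf ⊕ Fin ri) ℝ)
    (hPlr : Plr = fromBlocks 1 0 0 0)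
    -- the mixed improper Gramian
    (Pti : Matrix (Fin nf ⊕ Fin ni) (Fin rf ⊕ Fin ri) ℝ)
    (hPti : Pti = ∑ k ∈ Finset.range ν, FN k * B * Brᵀ * (FNr k)ᵀ) :
    A * Pti * Arᵀ - E * Pti * Erᵀ = (1 - Pl) * B * Brᵀ * (1 - Plr)ᵀ ∧
      Pr * Pti * Prrᵀ = 0 := by
  have hAFN : ∀ k, A * FN k = W * fromBlocks 0 0 0 (-(N ^ k)) * Winv := fun k => by
    rw [hA, hFN, mul_mul_mul_mul_of_mul_eq_one_s15 hT, fromBlocks_mul_fromBlocks_zero_zero_zero,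
      Matrix.one_mul]
  have hEFN : ∀ k, E * FN k = A * FN (k + 1) := fun k => by
    rw [hAFN, hE, hFN, mul_mul_mul_mul_of_mul_eq_one_s15 hT, fromBlocks_mul_fromBlocks_zero_zero_zero,
      Matrix.mul_neg, ← pow_succ']
  have hArFNr : ∀ k, Ar * FNr k = FNr k := fun k => by
    rw [hAr, hFNr, fromBlocks_mul_fromBlocks_zero_zero_zero, Matrix.one_mul]
  have hErFNr : ∀ k, Er * FNr k = FNr (k + 1) := fun k => by
    rw [hEr, hFNr, hFNr, fromBlocks_mul_fromBlocks_zero_zero_zero, Matrix.mul_neg, ← pow_succ']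
  have hAFN_zero : A * FN 0 = Pl - 1 := by
    rw [hAFN, pow_zero, ← fromBlocks_one_zero_zero_zero_sub_one,
      mul_sub_one_mul_of_mul_eq_one hW, hPl]
  have hFNr_zero : FNr 0 = Plr - 1 := by
    rw [hFNr, pow_zero, ← fromBlocks_one_zero_zero_zero_sub_one, hPlr]
  have hFN_nu : FN ν = 0 := by
    rw [hFN, hN, neg_zero, fromBlocks_zero, Matrix.mul_zero, Matrix.zero_mul]
  have hPrFN : ∀ k, Pr * FN k = 0 := fun k => by
    rw [hPr, hFN, mul_mul_mul_mul_of_mul_eq_one_s15 hT, fromBlocks_mul_fromBlocks_zero_zero_zero,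
      Matrix.zero_mul, fromBlocks_zero, Matrix.mul_zero, Matrix.zero_mul]
  constructor
  · rw [hPti, sylvester_residual_sum_eq_sub A E Ar Er FN FNr B Br hEFN hArFNr hErFNr, hAFN_zero,
      hFNr_zero, hFN_nu, ← neg_sub 1 Pl, ← neg_sub 1 Plr]
    simp only [transpose_neg, Matrix.neg_mul, Matrix.mul_neg, neg_neg, Matrix.mul_zero,
      Matrix.zero_mul, sub_zero]
  · have hPrPti : Pr * Pti = 0 := by
      rw [hPti, Matrix.mul_sum]
      exact Finset.sum_eq_zero fun k _ => by simp only [← Matrix.mul_assoc, hPrFN, Matrix.zero_mul]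
    rw [hPrPti, Matrix.zero_mul]

/-- The mixed improper Gramian `P̃_i = ∑_{k<ν} F_N(k)·B·B̂ᵀ·F̂_N(k)ᵀ` solves the
projected generalized discrete-time Sylvester equation
`A·P̃_i·Âᵀ − E·P̃_i·Êᵀ = (I − P_l)·B·B̂ᵀ·(I − P̂_l)ᵀ` together with `P_r·P̃_i·P̂_rᵀ = 0`. -/
theorem mixed_improper_gramian_sylvester
    {nf ni m : ℕ} (hm : 0 < m) (ν : ℕ) (hν : 0 < ν)
    -- Weierstraß canonical form data for the full-order system
    (W T Winv Tinv : Matrix (Fin nf ⊕ Fin ni) (Fin nf ⊕ Fin ni) ℝ)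
    (hW : W * Winv = 1) (hW' : Winv * W = 1)
    (hT : T * Tinv = 1) (hT' : Tinv * T = 1)
    (J : Matrix (Fin nf) (Fin nf) ℝ) (N : Matrix (Fin ni) (Fin ni) ℝ) (hN : N ^ ν = 0)
    (C α : ℝ) (hC : 0 < C) (hα : 0 < α)
    (hJ : ∀ t : ℝ, 0 ≤ t → opNorm (mexp (t • J)) ≤ C * Real.exp (-α * t))
    (E A : Matrix (Fin nf ⊕ Fin ni) (Fin nf ⊕ Fin ni) ℝ)
    (hE : E = W * fromBlocks 1 0 0 N * T)
    (hA : A = W * fromBlocks J 0 0 1 * T)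
    (B : Matrix (Fin nf ⊕ Fin ni) (Fin m) ℝ)
    (M : Matrix (Fin nf ⊕ Fin ni) (Fin nf ⊕ Fin ni) ℝ) (hM : M.IsSymm)
    -- spectral projectors
    (Pr Pl : Matrix (Fin nf ⊕ Fin ni) (Fin nf ⊕ Fin ni) ℝ)
    (hPr : Pr = Tinv * fromBlocks 1 0 0 0 * T)
    (hPl : Pl = W * fromBlocks 1 0 0 0 * Winv)
    -- fundamental solution matrices
    (FJ : ℝ → Matrix (Fin nf ⊕ Fin ni) (Fin nf ⊕ Fin ni) ℝ)
    (hFJ : ∀ t : ℝ, FJ t = Tinv * fromBlocks (mexp (t • J)) 0 0 0 * Winv)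
    (FN : ℕ → Matrix (Fin nf ⊕ Fin ni) (Fin nf ⊕ Fin ni) ℝ)
    (hFN : ∀ k : ℕ, FN k = Tinv * fromBlocks 0 0 0 (-(N ^ k)) * Winv)
    -- proper and improper controllability Gramians
    (Pp : Matrix (Fin nf ⊕ Fin ni) (Fin nf ⊕ Fin ni) ℝ)
    (hPp : Pp = matIntIoi fun t => FJ t * B * Bᵀ * (FJ t)ᵀ)
    (Pimp : Matrix (Fin nf ⊕ Fin ni) (Fin nf ⊕ Fin ni) ℝ)
    (hPimp : Pimp = ∑ k ∈ Finset.range ν, FN k * B * Bᵀ * (FN k)ᵀ)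
    -- reduced-order data
    {rf ri : ℕ}
    (A1r : Matrix (Fin rf) (Fin rf) ℝ) (E2r : Matrix (Fin ri) (Fin ri) ℝ) (hE2r : E2r ^ ν = 0)
    (Cr αr : ℝ) (hCr : 0 < Cr) (hαr : 0 < αr)
    (hA1r : ∀ t : ℝ, 0 ≤ t → opNorm (mexp (t • A1r)) ≤ Cr * Real.exp (-αr * t))
    (Br : Matrix (Fin rf ⊕ Fin ri) (Fin m) ℝ)
    (Mr : Matrix (Fin rf ⊕ Fin ri) (Fin rf ⊕ Fin ri) ℝ) (hMr : Mr.IsSymm)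
    (FJr : ℝ → Matrix (Fin rf ⊕ Fin ri) (Fin rf ⊕ Fin ri) ℝ)
    (hFJr : ∀ t : ℝ, FJr t = fromBlocks (mexp (t • A1r)) 0 0 0)
    (FNr : ℕ → Matrix (Fin rf ⊕ Fin ri) (Fin rf ⊕ Fin ri) ℝ)
    (hFNr : ∀ k : ℕ, FNr k = fromBlocks 0 0 0 (-(E2r ^ k)))
    -- reduced-order matrices and projectors
    (Er Ar : Matrix (Fin rf ⊕ Fin ri) (Fin rf ⊕ Fin ri) ℝ)
    (hEr : Er = fromBlocks 1 0 0 E2r) (hAr : Ar = fromBlocks A1r 0 0 1)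
    (Plr Prr : Matrix (Fin rf ⊕ Fin ri) (Fin rf ⊕ Fin ri) ℝ)
    (hPlr : Plr = fromBlocks 1 0 0 0) (hPrr : Prr = fromBlocks 1 0 0 0)
    -- the mixed improper Gramian
    (Pti : Matrix (Fin nf ⊕ Fin ni) (Fin rf ⊕ Fin ri) ℝ)
    (hPti : Pti = ∑ k ∈ Finset.range ν, FN k * B * Brᵀ * (FNr k)ᵀ) :
    A * Pti * Arᵀ - E * Pti * Erᵀ = (1 - Pl) * B * Brᵀ * (1 - Plr)ᵀ ∧
      Pr * Pti * Prrᵀ = 0 :=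
  mixed_improper_gramian_sylvester_general ν W T Winv Tinv hW hT J N hN E A hE hA B Pr Pl hPr hPl FN
    hFN A1r E2r Br FNr hFNr Er Ar hEr hAr Plr Prr hPlr Pti hPti
end
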